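/- Let F be a field of characteristic ≠ 2 and let n ≥ 2. Let A be the n-dimensional commutative F-algebra with basis a_1, …, a_n and multiplication determined by a_i · a_j = (1/2)(a_i + a_j) for all i, j (the gametic algebra for simple Mendelian inheritance G(n,2)). Then A is not an evolution algebra: there is no basis (e_1, …, e_n) of A such that e_i · e_j = 0 for all i ≠ j. -/

import Mathlib

/-!
Let `w` be the weight functional, the sum of the coordinates in the basis `a`. By bilinearity the
multiplication is `x · y = ½ (w(y) x + w(x) y)` on all of `A`. If `e` were a natural basis, then for
`i ≠ j` the relation `w(e_j) e_i + w(e_i) e_j = 0` would force `w(e_i) = w(e_j) = 0`, so `w` would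
vanish on a basis, contradicting `w(a_i) = 1`.
-/

open Module

section GameticMul

variable {F A ι : Type*} [Field F] [AddCommGroup A] [Module F A]

noncomputable def gameticMul (w : A →ₗ[F] F) : A →ₗ[F] A →ₗ[F] A :=
  (2 : F)⁻¹ • (LinearMap.smulRightₗ w + (LinearMap.smulRightₗ w).flip)

@[simp]
theorem gameticMul_apply (w : A →ₗ[F] F) (x y : A) :
    gameticMul w x y = (2 : F)⁻¹ • (w y • x + w x • y) := rfl

theorem eq_gameticMul_sumCoords (m : A →ₗ[F] A →ₗ[F] A) (a : Basis ι F A)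
    (hmul : ∀ i j, m (a i) (a j) = (2 : F)⁻¹ • (a i + a j)) :
    m = gameticMul a.sumCoords :=
  a.ext fun i => a.ext fun j => by simp [hmul, Basis.sumCoords_self_apply]

theorem apply_eq_zero_of_gameticMul_eq_zero (h2 : (2 : F) ≠ 0) (w : A →ₗ[F] F)
    {v : ι → A} (hv : LinearIndependent F v) {i j : ι} (hij : i ≠ j)
    (hvij : gameticMul w (v i) (v j) = 0) : w (v j) = 0 := by
  rw [gameticMul_apply, smul_eq_zero, or_iff_right (inv_ne_zero h2)] at hvij
  exact ((LinearIndepOn.pair_iff v hij).mp (hv.linearIndepOn _) _ _ hvij).1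

theorem not_exists_basis_gameticMul_eq_zero [Nontrivial ι] (h2 : (2 : F) ≠ 0)
    {w : A →ₗ[F] F} (hw : w ≠ 0) :
    ¬ ∃ e : Basis ι F A, ∀ i j, i ≠ j → gameticMul w (e i) (e j) = 0 := by
  rintro ⟨e, he⟩
  refine hw (e.ext fun j => ?_)
  obtain ⟨i, hij⟩ := exists_ne j
  simpa using apply_eq_zero_of_gameticMul_eq_zero h2 w e.linearIndependent hij (he i j hij)

theorem Module.Basis.sumCoords_ne_zero [Nonempty ι] (a : Basis ι F A) :
    a.sumCoords ≠ 0 := fun h => by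
  simpa [h] using a.sumCoords_self_apply (Classical.arbitrary ι)

end GameticMul

theorem gametic_algebra_is_not_an_evolution_algebra
    (F : Type*) [Field F] (h2 : (2 : F) ≠ 0)
    (n : ℕ) (hn : 2 ≤ n)
    (A : Type*) [AddCommGroup A] [Module F A]
    (m : A →ₗ[F] A →ₗ[F] A)
    (a : Module.Basis (Fin n) F A)
    (hmul : ∀ i j : Fin n, m (a i) (a j) = (2 : F)⁻¹ • (a i + a j)) :
    ¬ ∃ e : Module.Basis (Fin n) F A, ∀ i j : Fin n, i ≠ j → m (e i) (e j) = 0 := by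
  have : Nontrivial (Fin n) := Fin.nontrivial_iff_two_le.mpr hn
  rw [eq_gameticMul_sumCoords m a hmul]
  exact not_exists_basis_gameticMul_eq_zero h2 a.sumCoords_ne_zero
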